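/- Let N ≥ 1, V > 0, ϱ ≥ 1, E_max ∈ ℝ, Ψ ∈ ℝ, and for i = 1,…,N let Ē_i ≥ 0 with Ē^{max} = max_i Ē_i. Let E_i : ℕ → ℝ and D : ℕ → ℝ be sequences, and define q_i : ℕ → ℝ by q_i(0) = 0 and q_i(t+1) = max(q_i(t) + E_i(t) − Ē_i, 0). Assume: (i) (E_i(t) − Ē_i)² ≤ (E_max − Ē_i)² for all i, t; and (ii) for every t there exist comparison values D^L(t) ≤ Ψ and E^L_i(t) ≤ Ē_i − ((ϱ−1)/ϱ)·Ē^{max} such that V·D(t) + Σ_{i=1}^N q_i(t)·E_i(t) ≤ ϱ·( V·D^L(t) + Σ_{i=1}^N q_i(t)·E^L_i(t) ). Then for every T ≥ 1, (1/T)·Σ_{t=0}^{T−1} D(t) ≤ ϱ·Ψ + B/V, where B = (1/2)·Σ_{i=1}^N (E_max − Ē_i)². -/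

import Mathlib

/-! The quadratic Lyapunov function `L(t) = ½ Σ_i q_i(t)²` drifts by at most
`Σ_i q_i(t)(E_i(t) − Ē_i) + B` per slot. Since `q_i ≥ 0` and `Ē_i ≤ Ē^max`, the energy
slack of the comparison policy absorbs the factor `ϱ` on its energy term:
`ϱ · q_i E^L_i ≤ q_i Ē_i`. Hence `V·D(t) + ΔL(t) ≤ ϱVΨ + B` in every slot, and
telescoping from `L(0) = 0` with `L(T) ≥ 0` bounds the average delay. -/

open Finset

theorem sq_max_zero_sub_sq_le (q a : ℝ) :
    max (q + a) 0 ^ 2 / 2 - q ^ 2 / 2 ≤ q * a + a ^ 2 / 2 := by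
  have h : max (q + a) 0 ^ 2 ≤ (q + a) ^ 2 := by
    rcases le_total 0 (q + a) with h | h
    · rw [max_eq_left h]
    · rw [max_eq_right h, zero_pow two_ne_zero]; exact sq_nonneg _
  linarith

theorem mul_mul_le_of_le_sub_div_mul {ϱ q e eL M : ℝ} (hϱ : 1 ≤ ϱ) (hq : 0 ≤ q)
    (he : e ≤ M) (heL : eL ≤ e - (ϱ - 1) / ϱ * M) : ϱ * (q * eL) ≤ q * e := by
  have hϱeL : ϱ * eL ≤ e :=
    calc ϱ * eL ≤ ϱ * (e - (ϱ - 1) / ϱ * M) := mul_le_mul_of_nonneg_left heL (by linarith)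
      _ = ϱ * e - (ϱ - 1) * M := by field_simp
      _ ≤ e := by nlinarith
  calc ϱ * (q * eL) = q * (ϱ * eL) := by ring
    _ ≤ q * e := mul_le_mul_of_nonneg_left hϱeL hq

theorem mul_sum_le_of_penalty_add_drift_le {V C : ℝ} {D L : ℕ → ℝ} {T : ℕ}
    (hL0 : L 0 = 0) (hLT : 0 ≤ L T) (h : ∀ t, V * D t + (L (t + 1) - L t) ≤ C) :
    V * ∑ t ∈ range T, D t ≤ T * C :=
  calc V * ∑ t ∈ range T, D t ≤ V * ∑ t ∈ range T, D t + (L T - L 0) := by linarith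
    _ = ∑ t ∈ range T, (V * D t + (L (t + 1) - L t)) := by
      rw [sum_add_distrib, sum_range_sub, mul_sum]
    _ ≤ ∑ _t ∈ range T, C := sum_le_sum fun t _ => h t
    _ = T * C := by simp

theorem sum_div_le_of_penalty_add_drift_le {V C : ℝ} {D L : ℕ → ℝ} {T : ℕ}
    (hV : 0 < V) (hT : 1 ≤ T) (hL0 : L 0 = 0) (hL : ∀ t, 0 ≤ L t)
    (h : ∀ t, V * D t + (L (t + 1) - L t) ≤ C) :
    (∑ t ∈ range T, D t) / T ≤ C / V := by
  have hT' : (0 : ℝ) < T := by exact_mod_cast hT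
  rw [div_le_div_iff₀ hT' hV, mul_comm _ V, mul_comm C]
  exact mul_sum_le_of_penalty_add_drift_le hL0 (hL T) h

noncomputable def lyapunov {ι : Type*} [Fintype ι] (q : ι → ℕ → ℝ) (t : ℕ) : ℝ :=
  ∑ i, q i t ^ 2 / 2

theorem lyapunov_nonneg {ι : Type*} [Fintype ι] (q : ι → ℕ → ℝ) (t : ℕ) :
    0 ≤ lyapunov q t := by
  unfold lyapunov; positivity

theorem lyapunov_zero {ι : Type*} [Fintype ι] {q : ι → ℕ → ℝ} (hq0 : ∀ i, q i 0 = 0) :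
    lyapunov q 0 = 0 := by
  simp [lyapunov, hq0]

section Queues

variable {ι : Type*} {q E : ι → ℕ → ℝ} {Ebar : ι → ℝ}

theorem queue_nonneg (hq0 : ∀ i, q i 0 = 0)
    (hqrec : ∀ i t, q i (t + 1) = max (q i t + E i t - Ebar i) 0) (i : ι) (t : ℕ) :
    0 ≤ q i t := by
  cases t with
  | zero => rw [hq0]
  | succ t => rw [hqrec]; exact le_max_right _ _

variable [Fintype ι]

theorem lyapunov_succ_sub_le {Emax : ℝ}
    (hqrec : ∀ i t, q i (t + 1) = max (q i t + E i t - Ebar i) 0)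
    (hE : ∀ i t, (E i t - Ebar i) ^ 2 ≤ (Emax - Ebar i) ^ 2) (t : ℕ) :
    lyapunov q (t + 1) - lyapunov q t ≤
      ∑ i, q i t * (E i t - Ebar i) + (1 / 2) * ∑ i, (Emax - Ebar i) ^ 2 := by
  rw [lyapunov, lyapunov, ← sum_sub_distrib, mul_sum, ← sum_add_distrib]
  refine sum_le_sum fun i _ => ?_
  have h := sq_max_zero_sub_sq_le (q i t) (E i t - Ebar i)
  rw [hqrec, add_sub_assoc]
  linarith [hE i t]

end Queues

theorem penalty_add_queue_drift_le {ι : Type*} [Fintype ι] {V ϱ Ψ M d dL : ℝ}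
    {q e eL Ebar : ι → ℝ} (hV : 0 ≤ V) (hϱ : 1 ≤ ϱ) (hq : ∀ i, 0 ≤ q i)
    (hEbar : ∀ i, Ebar i ≤ M) (hdL : dL ≤ Ψ) (heL : ∀ i, eL i ≤ Ebar i - (ϱ - 1) / ϱ * M)
    (hdp : V * d + ∑ i, q i * e i ≤ ϱ * (V * dL + ∑ i, q i * eL i)) :
    V * d + ∑ i, q i * (e i - Ebar i) ≤ ϱ * V * Ψ := by
  have hslack : ϱ * ∑ i, q i * eL i ≤ ∑ i, q i * Ebar i := by
    rw [mul_sum]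
    exact sum_le_sum fun i _ => mul_mul_le_of_le_sub_div_mul hϱ (hq i) (hEbar i) (heL i)
  have hdelay : ϱ * (V * dL) ≤ ϱ * V * Ψ := by
    rw [← mul_assoc]
    exact mul_le_mul_of_nonneg_left hdL (by positivity)
  simp only [mul_sub, sum_sub_distrib]
  linarith

theorem stmt_15_general (N : ℕ) (V ϱ : ℝ) (hV : 0 < V) (hϱ : 1 ≤ ϱ)
    (Emax Ψ : ℝ) (Ebar : Fin N → ℝ)
    (Ebarmax : ℝ) (hEbarmax : IsGreatest (Set.range Ebar) Ebarmax)
    (E : Fin N → ℕ → ℝ) (D : ℕ → ℝ)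
    (q : Fin N → ℕ → ℝ)
    (hq0 : ∀ i, q i 0 = 0)
    (hqrec : ∀ i t, q i (t + 1) = max (q i t + E i t - Ebar i) 0)
    (hE : ∀ i t, (E i t - Ebar i) ^ 2 ≤ (Emax - Ebar i) ^ 2)
    (hdp : ∀ t, ∃ (DL : ℝ) (EL : Fin N → ℝ),
      DL ≤ Ψ ∧
      (∀ i, EL i ≤ Ebar i - ((ϱ - 1) / ϱ) * Ebarmax) ∧
      V * D t + (∑ i, q i t * E i t) ≤ ϱ * (V * DL + ∑ i, q i t * EL i)) :
    ∀ T : ℕ, 1 ≤ T →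
      (∑ t ∈ Finset.range T, D t) / (T : ℝ) ≤
        ϱ * Ψ + ((1 / 2) * ∑ i, (Emax - Ebar i) ^ 2) / V := by
  intro T hT
  set B := (1 / 2) * ∑ i, (Emax - Ebar i) ^ 2
  have hslot : ∀ t, V * D t + (lyapunov q (t + 1) - lyapunov q t) ≤ ϱ * V * Ψ + B := by
    intro t
    obtain ⟨DL, EL, hDL, hEL, hdpt⟩ := hdp t
    have hpenalty := penalty_add_queue_drift_le hV.le hϱ (fun i => queue_nonneg hq0 hqrec i t)
      (fun i => hEbarmax.2 ⟨i, rfl⟩) hDL hEL hdpt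
    have hdrift : lyapunov q (t + 1) - lyapunov q t ≤ ∑ i, q i t * (E i t - Ebar i) + B :=
      lyapunov_succ_sub_le hqrec hE t
    linarith
  calc (∑ t ∈ range T, D t) / T ≤ (ϱ * V * Ψ + B) / V :=
        sum_div_le_of_penalty_add_drift_le hV hT (lyapunov_zero hq0) (lyapunov_nonneg q) hslot
    _ = ϱ * Ψ + B / V := by field_simp

/-- deterministic core of Theorem 6's delay bound for
OPEN-Autonomous: if in each slot the Nash equilibrium's drift-plus-penalty value
is at most `ϱ` times that of a comparison policy with delay at most `Ψ` and
per-slot energy at most `Ē_i − ((ϱ−1)/ϱ)·Ē^max`, then the time-averaged system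
delay is at most `ϱ·Ψ + B/V`. -/
theorem stmt_15 (N : ℕ) (hN : 1 ≤ N) (V ϱ : ℝ) (hV : 0 < V) (hϱ : 1 ≤ ϱ)
    (Emax Ψ : ℝ) (Ebar : Fin N → ℝ) (hEbar : ∀ i, 0 ≤ Ebar i)
    (Ebarmax : ℝ) (hEbarmax : IsGreatest (Set.range Ebar) Ebarmax)
    (E : Fin N → ℕ → ℝ) (D : ℕ → ℝ)
    (q : Fin N → ℕ → ℝ)
    (hq0 : ∀ i, q i 0 = 0)
    (hqrec : ∀ i t, q i (t + 1) = max (q i t + E i t - Ebar i) 0)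
    (hE : ∀ i t, (E i t - Ebar i) ^ 2 ≤ (Emax - Ebar i) ^ 2)
    (hdp : ∀ t, ∃ (DL : ℝ) (EL : Fin N → ℝ),
      DL ≤ Ψ ∧
      (∀ i, EL i ≤ Ebar i - ((ϱ - 1) / ϱ) * Ebarmax) ∧
      V * D t + (∑ i, q i t * E i t) ≤ ϱ * (V * DL + ∑ i, q i t * EL i)) :
    ∀ T : ℕ, 1 ≤ T →
      (∑ t ∈ Finset.range T, D t) / (T : ℝ) ≤
        ϱ * Ψ + ((1 / 2) * ∑ i, (Emax - Ebar i) ^ 2) / V :=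
  stmt_15_general N V ϱ hV hϱ Emax Ψ Ebar Ebarmax hEbarmax E D q hq0 hqrec hE hdp
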